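/- If σ̄₁ > σ̃ and σ̄₂ > σ̃, then there exists a unique ρ* > 0 satisfying (σ̄₁ + σ̄₂)·(1 − cosh ρ*) + σ̃·ρ*·sinh ρ* = 0. -/

import Mathlib

/-!
With `ρ = 2x`, the half-angle formulas factor the left-hand side as
`2 sinh x · (2σ̃ x cosh x − (σ̄₁ + σ̄₂) sinh x)`, so the positive roots are the solutions of
`x coth x = (σ̄₁ + σ̄₂) / (2σ̃)`. The function `x coth x` increases strictly from `1` (as `x → 0⁺`)
to `∞` on `(0, ∞)`, and `(σ̄₁ + σ̄₂) / (2σ̃) > 1` because both `σ̄ᵢ` exceed `σ̃`.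
-/

open Real Filter Set Topology

lemma hasDerivAt_mul_cosh_div_sinh {x : ℝ} (hx : sinh x ≠ 0) :
    HasDerivAt (fun x => x * cosh x / sinh x) ((sinh x * cosh x - x) / sinh x ^ 2) x := by
  have h := ((hasDerivAt_id x).mul (hasDerivAt_cosh x)).div (hasDerivAt_sinh x) hx
  refine h.congr_deriv ?_
  simp only [id, Pi.mul_apply, one_mul]
  congr 1
  linear_combination (-x) * cosh_sq_sub_sinh_sq x

-- Positivity of the derivative is `2x < sinh 2x = 2 sinh x cosh x`.
lemma strictMonoOn_mul_cosh_div_sinh :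
    StrictMonoOn (fun x => x * cosh x / sinh x) (Ioi 0) := by
  apply strictMonoOn_of_deriv_pos (convex_Ioi 0)
  · exact ((continuous_id.mul continuous_cosh).continuousOn).div continuous_sinh.continuousOn
      fun x hx => (sinh_pos_iff.mpr hx).ne'
  · intro x hx
    rw [interior_Ioi] at hx
    have hsinh : 0 < sinh x := sinh_pos_iff.mpr hx
    have hdouble : 2 * x < sinh (2 * x) := self_lt_sinh_iff.mpr (by linarith [mem_Ioi.mp hx])
    rw [sinh_two_mul] at hdouble
    rw [(hasDerivAt_mul_cosh_div_sinh hsinh.ne').deriv]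
    exact div_pos (by linarith) (by positivity)

lemma existsUnique_pos_mul_mul_cosh_eq_mul_sinh {p q : ℝ} (hp : 0 < p) (hpq : p < q) :
    ∃! x : ℝ, 0 < x ∧ p * x * cosh x = q * sinh x := by
  have hq : 0 < q := hp.trans hpq
  set G : ℝ → ℝ := fun x => q * sinh x - p * x * cosh x
  have hsmall : ∀ᶠ x in 𝓝[>] 0, p * cosh x < q ∧ x ∈ Ioo 0 (q / p) := by
    have hcosh : Tendsto (fun x => p * cosh x) (𝓝[>] 0) (𝓝 p) := by
      refine ((show Continuous fun x => p * cosh x by fun_prop).tendsto' 0 p ?_).mono_left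
        nhdsWithin_le_nhds
      simp
    exact (hcosh.eventually_lt_const hpq).and (Ioo_mem_nhdsGT (by positivity))
  obtain ⟨a, hacosh, ha, haq⟩ := hsmall.exists
  have hGa : 0 < G a := by
    have : p * a * cosh a < q * a := by nlinarith
    nlinarith [self_lt_sinh_iff.mpr ha]
  have hGq : G (q / p) < 0 := by
    have : p * (q / p) = q := by field_simp
    simp only [G, this]
    nlinarith [sinh_lt_cosh (q / p)]
  have hG : Continuous G := by fun_prop
  obtain ⟨x, hx, hGx⟩ := intermediate_value_Icc' haq.le hG.continuousOn ⟨hGq.le, hGa.le⟩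
  have hx0 : 0 < x := ha.trans_le hx.1
  have hroot : p * x * cosh x = q * sinh x := by linarith [show G x = 0 from hGx]
  refine ⟨x, ⟨hx0, hroot⟩, fun y ⟨hy0, hy⟩ => ?_⟩
  have hratio : ∀ z, 0 < z → p * z * cosh z = q * sinh z → z * cosh z / sinh z = q / p := by
    intro z hz hz_root
    rw [div_eq_div_iff (sinh_pos_iff.mpr hz).ne' hp.ne']
    linarith
  exact strictMonoOn_mul_cosh_div_sinh.injOn hy0 hx0
    ((hratio y hy0 hy).trans (hratio x hx0 hroot).symm)

lemma mul_one_sub_cosh_two_mul_add_mul_sinh_two_mul (a b x : ℝ) :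
    a * (1 - cosh (2 * x)) + b * (2 * x) * sinh (2 * x) =
      2 * sinh x * (2 * b * x * cosh x - a * sinh x) := by
  rw [cosh_two_mul, sinh_two_mul]
  linear_combination (-a) * cosh_sq_sub_sinh_sq x

theorem stmt_8_general (σ₁ σ₂ σt : ℝ) (hσt : 0 < σt)
    (h₁ : σt < σ₁) (h₂ : σt < σ₂) :
    ∃! ρ : ℝ, 0 < ρ ∧ (σ₁ + σ₂) * (1 - Real.cosh ρ) + σt * ρ * Real.sinh ρ = 0 := by
  refine ((Equiv.mulLeft₀ (2 : ℝ) two_ne_zero).existsUnique_congr fun x => ?_).mp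
    (existsUnique_pos_mul_mul_cosh_eq_mul_sinh (p := 2 * σt) (q := σ₁ + σ₂)
      (by positivity) (by linarith))
  show _ ↔ 0 < 2 * x ∧ (σ₁ + σ₂) * (1 - cosh (2 * x)) + σt * (2 * x) * sinh (2 * x) = 0
  rw [mul_one_sub_cosh_two_mul_add_mul_sinh_two_mul, mul_pos_iff_of_pos_left two_pos]
  refine and_congr_right fun hx => ?_
  rw [mul_eq_zero_iff_left (by positivity [sinh_pos_iff.mpr hx]), sub_eq_zero]

/-- if σ̄₁ > σ̃ and σ̄₂ > σ̃, there exists a unique ρ* > 0 with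
(σ̄₁ + σ̄₂)·(1 − cosh ρ*) + σ̃·ρ*·sinh ρ* = 0. -/
theorem stmt_8 (σ₁ σ₂ σt : ℝ) (hσ₁ : 0 < σ₁) (hσ₂ : 0 < σ₂) (hσt : 0 < σt)
    (h₁ : σt < σ₁) (h₂ : σt < σ₂) :
    ∃! ρ : ℝ, 0 < ρ ∧ (σ₁ + σ₂) * (1 - Real.cosh ρ) + σt * ρ * Real.sinh ρ = 0 :=
  stmt_8_general σ₁ σ₂ σt hσt h₁ h₂
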